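/- arXiv:1410.0893 — 7 statements merged into one kernel-verified Lean document; each statement's English description precedes it below -/
import Mathlib

section
/- Let W be a commutative monoid and A a type of labels. Let ρX : X → A → (X →₀ W) and ρY : Y → A → (Y →₀ W) be image-finite W-weighted labelled transition systems, regarded as functional W-ULTraSs in which x →a φ holds if and only if φ = ρX x a (and similarly for Y). Then a relation R ⊆ X × Y is a bisimulation between these two ULTraSs if and only if R is a W-weighted bisimulation, i.e. for every (x, y) ∈ R, every a ∈ A and every pair (C, D) ∈ R*, Σ_{c ∈ C} (ρX x a) c = Σ_{d ∈ D} (ρY y a) d. -/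
open scoped Classical

/-- The sum of a finitely supported weight function over a set of states. -/
noncomputable def sumOn {X W : Type*} [AddCommMonoid W] (φ : X →₀ W) (C : Set X) : W :=
  ∑ x ∈ φ.support, if x ∈ C then φ x else 0

/-- `(C, D)` belongs to the subset closure `R*` of the relation `R`. -/
def SubsetClosure {X Y : Type*} (R : X → Y → Prop) (C : Set X) (D : Set Y) : Prop :=
  ∀ x y, R x y → (x ∈ C → y ∈ D) ∧ (y ∈ D → x ∈ C)

/-- Weight functions `φ` and `ψ` are `R_W`-related. -/
def RW {X Y W : Type*} [AddCommMonoid W] (R : X → Y → Prop) (φ : X →₀ W) (ψ : Y →₀ W) :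
    Prop :=
  ∀ C D, SubsetClosure R C D → sumOn φ C = sumOn ψ D

/-- `R` is a bisimulation between two image-finite `W`-ULTraSs given by their
transition maps `trX`, `trY` (where `x →a ρ` iff `ρ ∈ trX x a`). -/
def IsBisimulation {X Y W A : Type*} [AddCommMonoid W]
    (trX : X → A → Finset (X →₀ W)) (trY : Y → A → Finset (Y →₀ W))
    (R : X → Y → Prop) : Prop :=
  ∀ x y, R x y → ∀ a : A,
    (∀ φ ∈ trX x a, ∃ ψ ∈ trY y a, RW R φ ψ) ∧
    (∀ ψ ∈ trY y a, ∃ φ ∈ trX x a, RW R φ ψ)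

/-- Bisimulations between functional ULTraSs (i.e. weighted LTSs) are exactly
`W`-weighted bisimulations. -/
theorem bisimulation_iff_weighted_bisimulation
    {W X Y A : Type*} [AddCommMonoid W]
    (ρX : X → A → (X →₀ W)) (ρY : Y → A → (Y →₀ W)) (R : X → Y → Prop) :
    IsBisimulation (fun x a => {ρX x a}) (fun y a => {ρY y a}) R ↔
      (∀ x y, R x y → ∀ a : A, ∀ (C : Set X) (D : Set Y), SubsetClosure R C D →
        sumOn (ρX x a) C = sumOn (ρY y a) D) := by
  constructor
  · intro h x y hxy a C D hCD
    obtain ⟨h1, _⟩ := h x y hxy a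
    obtain ⟨ψ, hψ, hrw⟩ := h1 (ρX x a) (Finset.mem_singleton_self _)
    rw [Finset.mem_singleton] at hψ
    subst hψ
    exact hrw C D hCD
  · intro h x y hxy a
    refine ⟨?_, ?_⟩ <;> intro φ hφ <;> rw [Finset.mem_singleton] at hφ <;> subst hφ
    · exact ⟨_, Finset.mem_singleton_self _, fun C D hCD => h x y hxy a C D hCD⟩
    · exact ⟨_, Finset.mem_singleton_self _, fun C D hCD => h x y hxy a C D hCD⟩
end

section
/- Let (X, A, →) be an image-finite Segala system, i.e. an image-finite ULTraS over the commutative monoid (ℝ≥0, +, 0) of nonnegative reals such that every weight function φ with x →a φ is a probability distribution (Σ_{z ∈ X} φ z = 1). Then an equivalence relation R on X is a bisimulation (between the system and itself) if and only if it is a Segala–Lynch strong bisimulation: for all (x, y) ∈ R and every label a ∈ A, whenever x →a φ there exists ψ with y →a ψ such that Σ_{z ∈ E} φ z = Σ_{z ∈ E} ψ z for every R-equivalence class E ⊆ X, and symmetrically with the roles of x and y exchanged. -/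
open scoped Classical

/-!
Collapsing each state to its `R`-class turns a weight function `φ` into a weight function
`φ.mapDomain (Quot.mk R)` on the quotient. For reflexive `R`, the pairs in `R*` are exactly
`(C, C)` with `C` a union of classes, so `φ` and `ψ` are `R_W`-related iff their collapses
agree; when `R` is an equivalence the collapse evaluated at the class of `z` is the weight of
`{w | R z w}`, which is the Segala–Lynch condition.
-/

open Finsupp

section SumOn

variable {X Y W : Type*} [AddCommMonoid W]

theorem sumOn_mapDomain (f : X → Y) (φ : X →₀ W) (C : Set Y) :
    sumOn (φ.mapDomain f) C = sumOn φ (f ⁻¹' C) :=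
  sum_mapDomain_index (h := fun y w => if y ∈ C then w else 0)
    (fun _ => ite_self 0) (fun _ _ _ => by split_ifs <;> simp)

theorem sumOn_singleton (φ : X →₀ W) (x : X) : sumOn φ {x} = φ x := by
  simp only [sumOn, Set.mem_singleton_iff, Finset.sum_ite_eq']
  split_ifs with hx
  · rfl
  · exact (notMem_support_iff.mp hx).symm

theorem sumOn_preimage_singleton (f : X → Y) (φ : X →₀ W) (y : Y) :
    sumOn φ (f ⁻¹' {y}) = φ.mapDomain f y := by
  rw [← sumOn_mapDomain, sumOn_singleton]

end SumOn

section SubsetClosure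

variable {X : Type*} {R : X → X → Prop}

theorem subsetClosure_preimage_quot (S : Set (Quot R)) :
    SubsetClosure R (Quot.mk R ⁻¹' S) (Quot.mk R ⁻¹' S) := fun _ _ hxy => by
  simp only [Set.mem_preimage, Quot.sound hxy, imp_self, and_self]

theorem SubsetClosure.mem_iff {C D : Set X} (h : SubsetClosure R C D) {x y : X}
    (hxy : R x y) : x ∈ C ↔ y ∈ D :=
  ⟨(h x y hxy).1, (h x y hxy).2⟩

theorem SubsetClosure.eq_of_reflexive {C D : Set X} (h : SubsetClosure R C D)
    (hR : ∀ x, R x x) : C = D :=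
  Set.ext fun x => h.mem_iff (hR x)

theorem SubsetClosure.preimage_image_quot {C : Set X} (h : SubsetClosure R C C) :
    Quot.mk R ⁻¹' (Quot.mk R '' C) = C := by
  refine (Set.subset_preimage_image _ C).antisymm' ?_
  rintro y ⟨x, hx, hxy⟩
  have hiff : ∀ a b, Relation.EqvGen R a b → (a ∈ C ↔ b ∈ C) := fun a b hab => by
    induction hab with
    | rel _ _ hab => exact h.mem_iff hab
    | refl => rfl
    | symm _ _ _ ih => exact ih.symm
    | trans _ _ _ _ _ ihab ihbc => exact ihab.trans ihbc
  exact (hiff x y (Quot.eqvGen_exact hxy)).1 hx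

end SubsetClosure

section Collapse

variable {X W : Type*} [AddCommMonoid W] {R : X → X → Prop}

theorem rw_iff_mapDomain_quot_eq (hR : ∀ x, R x x) (φ ψ : X →₀ W) :
    RW R φ ψ ↔ φ.mapDomain (Quot.mk R) = ψ.mapDomain (Quot.mk R) := by
  constructor
  · intro h
    ext q
    rw [← sumOn_preimage_singleton, ← sumOn_preimage_singleton]
    exact h _ _ (subsetClosure_preimage_quot {q})
  · intro h C D hCD
    obtain rfl := hCD.eq_of_reflexive hR
    rw [← hCD.preimage_image_quot, ← sumOn_mapDomain, ← sumOn_mapDomain, h]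

theorem mapDomain_quot_eq_iff (hR : Equivalence R) (φ ψ : X →₀ W) :
    φ.mapDomain (Quot.mk R) = ψ.mapDomain (Quot.mk R) ↔
      ∀ z, sumOn φ {w | R z w} = sumOn ψ {w | R z w} := by
  have hclass : ∀ z, {w | R z w} = Quot.mk R ⁻¹' {Quot.mk R z} := fun z => Set.ext fun w =>
    (hR.eqvGen_iff.symm.trans ⟨Quot.eqvGen_sound, Quot.eqvGen_exact⟩).trans eq_comm
  simp only [hclass, sumOn_preimage_singleton]
  exact ⟨fun h z => by rw [h], fun h => Finsupp.ext (Quot.ind h)⟩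

theorem rw_iff_forall_sumOn_class (hR : Equivalence R) (φ ψ : X →₀ W) :
    RW R φ ψ ↔ ∀ z, sumOn φ {w | R z w} = sumOn ψ {w | R z w} :=
  (rw_iff_mapDomain_quot_eq hR.refl φ ψ).trans (mapDomain_quot_eq_iff hR φ ψ)

end Collapse

theorem bisimulation_iff_segala_bisimulation_general
    {X A : Type*}
    (tr : X → A → Finset (X →₀ NNReal))
    (R : X → X → Prop) (hR : Equivalence R) :
    IsBisimulation tr tr R ↔
      ∀ x y, R x y → ∀ a : A,
        (∀ φ ∈ tr x a, ∃ ψ ∈ tr y a,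
          ∀ z : X, sumOn φ {w | R z w} = sumOn ψ {w | R z w}) ∧
        (∀ ψ ∈ tr y a, ∃ φ ∈ tr x a,
          ∀ z : X, sumOn φ {w | R z w} = sumOn ψ {w | R z w}) := by
  simp only [IsBisimulation, rw_iff_forall_sumOn_class hR]

/-- On image-finite Segala systems (ULTraSs over `ℝ≥0` whose weight functions are
probability distributions), an equivalence relation is a bisimulation iff it is a
Segala–Lynch strong bisimulation. -/
theorem bisimulation_iff_segala_bisimulation
    {X A : Type*}
    (tr : X → A → Finset (X →₀ NNReal))
    (hprob : ∀ x : X, ∀ a : A, ∀ φ ∈ tr x a, (∑ z ∈ φ.support, φ z) = 1)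
    (R : X → X → Prop) (hR : Equivalence R) :
    IsBisimulation tr tr R ↔
      ∀ x y, R x y → ∀ a : A,
        (∀ φ ∈ tr x a, ∃ ψ ∈ tr y a,
          ∀ z : X, sumOn φ {w | R z w} = sumOn ψ {w | R z w}) ∧
        (∀ ψ ∈ tr y a, ∃ φ ∈ tr x a,
          ∀ z : X, sumOn φ {w | R z w} = sumOn ψ {w | R z w}) :=
  bisimulation_iff_segala_bisimulation_general tr R hR
end

section
/- Let W be a commutative monoid, X a type, and R an equivalence relation on X. Then: (1) the subset closure R* consists exactly of the pairs (C, C) where C ⊆ X is R-closed (a union of R-equivalence classes); and (2) two finitely supported weight functions φ, ψ : X →₀ W are R_W-related if and only if Σ_{x ∈ E} φ x = Σ_{x ∈ E} ψ x for every R-equivalence class E ⊆ X. -/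
open scoped Classical

lemma sumOn_closed_decomp {X W : Type*} [AddCommMonoid W] (R : X → X → Prop)
    (hR : Equivalence R) (C : Set X) (hC : ∀ x y, R x y → x ∈ C → y ∈ C)
    (φ : X →₀ W) (s : Finset X) (hs : φ.support ⊆ s) :
    sumOn φ C = ∑ q ∈ (s.filter (· ∈ C)).image (Quotient.mk (⟨R, hR⟩ : Setoid X)),
      sumOn φ {w | R (Quotient.out q) w} := by
  classical
  set st : Setoid X := ⟨R, hR⟩ with hst
  unfold sumOn
  rw [Finset.sum_comm]
  apply Finset.sum_congr rfl
  intro x hx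
  have key : ∀ q : Quotient st, (R (Quotient.out q) x) ↔ q = Quotient.mk st x := by
    intro q
    constructor
    · intro h
      rw [← Quotient.out_eq q]
      exact Quotient.sound h
    · intro h
      subst h
      exact Quotient.mk_out x
  symm
  calc ∑ q ∈ (s.filter (· ∈ C)).image (Quotient.mk st),
          (if x ∈ {w | R (Quotient.out q) w} then φ x else 0)
      = ∑ q ∈ (s.filter (· ∈ C)).image (Quotient.mk st),
          (if q = Quotient.mk st x then φ x else 0) := by
        apply Finset.sum_congr rfl
        intro q _
        simp only [Set.mem_setOf_eq, key q]
    _ = if Quotient.mk st x ∈ (s.filter (· ∈ C)).image (Quotient.mk st) then φ x else 0 :=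
        Finset.sum_ite_eq' _ _ _
    _ = if x ∈ C then φ x else 0 := by
        congr 1
        simp only [Finset.mem_image, Finset.mem_filter, eq_iff_iff]
        constructor
        · rintro ⟨y, ⟨hys, hyC⟩, hyx⟩
          exact hC y x (Quotient.exact hyx) hyC
        · intro hxC
          exact ⟨x, ⟨hs hx, hxC⟩, rfl⟩

/-- For an equivalence relation `R`: (1) the subset closure `R*` consists exactly of
the pairs `(C, C)` with `C` an `R`-closed set (a union of `R`-equivalence classes);
(2) `φ` and `ψ` are `R_W`-related iff they assign the same total weight to every
`R`-equivalence class. -/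
theorem subsetClosure_and_RW_of_equivalence
    {X W : Type*} [AddCommMonoid W] (R : X → X → Prop) (hR : Equivalence R) :
    (∀ C D : Set X, SubsetClosure R C D ↔
      (C = D ∧ ∀ x y, R x y → x ∈ C → y ∈ C)) ∧
    (∀ φ ψ : X →₀ W, RW R φ ψ ↔
      ∀ z : X, sumOn φ {w | R z w} = sumOn ψ {w | R z w}) := by
  have part1 : ∀ C D : Set X, SubsetClosure R C D ↔
      (C = D ∧ ∀ x y, R x y → x ∈ C → y ∈ C) := by
    intro C D
    constructor
    · intro h
      have hCD : C = D := by
        ext x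
        constructor
        · intro hx; exact (h x x (hR.refl x)).1 hx
        · intro hx; exact (h x x (hR.refl x)).2 hx
      subst hCD
      refine ⟨rfl, fun x y hxy hx => (h x y hxy).1 hx⟩
    · rintro ⟨rfl, hclosed⟩
      intro x y hxy
      exact ⟨hclosed x y hxy, hclosed y x (hR.symm hxy)⟩
  refine ⟨part1, fun φ ψ => ⟨fun h z => ?_, fun h C D hCD => ?_⟩⟩
  · apply h
    rw [part1]
    refine ⟨rfl, fun x y hxy hx => hR.trans hx hxy⟩
  · obtain ⟨rfl, hclosed⟩ := (part1 C D).1 hCD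
    set s : Finset X := φ.support ∪ ψ.support with hs
    rw [sumOn_closed_decomp R hR C hclosed φ s Finset.subset_union_left,
        sumOn_closed_decomp R hR C hclosed ψ s Finset.subset_union_right]
    exact Finset.sum_congr rfl fun q _ => h (Quotient.out q)
end

section
/- Let W be a commutative monoid and (X, A, →) an image-finite W-ULTraS with at most one kind of termination for each label, i.e. for each a ∈ A: (i) if some x ∈ X has no a-transition ({ρ | x →a ρ} = ∅) then no y ∈ X has the zero weight function among its a-successors, and (ii) if some x ∈ X has the zero weight function among its a-successors then every y ∈ X has at least one a-transition. Let R be an equivalence relation on X that is a bisimulation, and let ≈ denote the equivalence relation on X →₀ W given by R_W-relatedness. Define M(x, a, C) = { [ρ]_≈ | x →a ρ and Σ_{z ∈ C} ρ z ≠ 0 } ∪ { [0]_≈ }, a set of ≈-equivalence classes of weight functions, where 0 is the zero weight function. Then R is an M-bisimulation: for all (x, y) ∈ R, every label a ∈ A and every R-equivalence class C ⊆ X, M(x, a, C) = M(y, a, C). -/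
open scoped Classical

/-- The `M`-function of Proposition 3: `M(x, a, C)` is the set of `R_W`-equivalence
classes of weight functions reachable from `x` via `a` assigning a non-zero weight
to `C`, together with the class of the zero weight function. -/
def Mfun {X A W : Type*} [AddCommMonoid W]
    (tr : X → A → Finset (X →₀ W)) (R : X → X → Prop)
    (x : X) (a : A) (C : Set X) : Set (Set (X →₀ W)) :=
  {E : Set (X →₀ W) | ∃ ρ ∈ tr x a, sumOn ρ C ≠ 0 ∧ E = {σ | RW R ρ σ}} ∪
    {{σ | RW R (0 : X →₀ W) σ}}


section Aux

variable {X W : Type*} [AddCommMonoid W] {R : X → X → Prop}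

lemma sc_symm (hR : Equivalence R) {C D : Set X} (h : SubsetClosure R C D) :
    SubsetClosure R D C := fun x y hxy =>
  ⟨(h y x (hR.symm hxy)).2, (h y x (hR.symm hxy)).1⟩

lemma sc_right (hR : Equivalence R) {C D : Set X} (h : SubsetClosure R C D) :
    SubsetClosure R D D := fun x y hxy =>
  ⟨fun hx => (h y y (hR.refl y)).1 ((h y x (hR.symm hxy)).2 hx),
   fun hy => (h x x (hR.refl x)).1 ((h x y hxy).2 hy)⟩

lemma rw_symm (hR : Equivalence R) {φ ψ : X →₀ W} (h : RW R φ ψ) : RW R ψ φ :=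
  fun C D hCD => (h D C (sc_symm hR hCD)).symm

lemma rw_trans (hR : Equivalence R) {φ ψ χ : X →₀ W} (h1 : RW R φ ψ) (h2 : RW R ψ χ) :
    RW R φ χ := fun C D hCD => (h1 C D hCD).trans (h2 D D (sc_right hR hCD))

lemma rw_class_eq (hR : Equivalence R) {ρ ψ : X →₀ W} (h : RW R ρ ψ) :
    {σ : X →₀ W | RW R ρ σ} = {σ | RW R ψ σ} := by
  ext σ
  exact ⟨fun hs => rw_trans hR (rw_symm hR h) hs, fun hs => rw_trans hR h hs⟩

lemma sc_class (hR : Equivalence R) (z : X) :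
    SubsetClosure R {w | R z w} {w | R z w} := fun x y hxy =>
  ⟨fun hx => hR.trans hx hxy, fun hy => hR.trans hy (hR.symm hxy)⟩

lemma Mfun_mono {A : Type*} (tr : X → A → Finset (X →₀ W)) (hR : Equivalence R)
    (hbis : IsBisimulation tr tr R) {x y : X} (hxy : R x y) (a : A) (z : X) :
    Mfun tr R x a {w | R z w} ⊆ Mfun tr R y a {w | R z w} := by
  rintro E (⟨ρ, hρ, hne, rfl⟩ | hE)
  · obtain ⟨ψ, hψ, hrw⟩ := (hbis x y hxy a).1 ρ hρ
    left
    refine ⟨ψ, hψ, ?_, rw_class_eq hR hrw⟩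
    rw [← hrw _ _ (sc_class hR z)]
    exact hne
  · right; exact hE

end Aux

/-- On a `W`-ULTraS with at most one kind of termination for each label, every
equivalence bisimulation `R` is an `M`-bisimulation for the `M`-function `Mfun`. -/
theorem bisimulation_is_M_bisimulation
    {X A W : Type*} [AddCommMonoid W]
    (tr : X → A → Finset (X →₀ W))
    (hstuck : ∀ a : A, (∃ x, tr x a = ∅) → ∀ y, (0 : X →₀ W) ∉ tr y a)
    (hterm : ∀ a : A, (∃ x, (0 : X →₀ W) ∈ tr x a) → ∀ y, tr y a ≠ ∅)
    (R : X → X → Prop) (hR : Equivalence R)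
    (hbis : IsBisimulation tr tr R) :
    ∀ x y, R x y → ∀ a : A, ∀ z : X,
      Mfun tr R x a {w | R z w} = Mfun tr R y a {w | R z w} := by
  intro x y hxy a z
  exact le_antisymm (Mfun_mono tr hR hbis hxy a z)
    (Mfun_mono tr hR hbis (hR.symm hxy) a z)
end

section
/- Let W be a positive refinement commutative monoid and A a type of labels, and let B be the endofunctor on types sending X to A → Finset (X →₀ W). Let (X1, h1), (X2, h2) and (Y, g) be B-coalgebras, let f1 : (X1, h1) → (Y, g) and f2 : (X2, h2) → (Y, g) be B-coalgebra morphisms, and let R = { (x1, x2) ∈ X1 × X2 | f1 x1 = f2 x2 } be their pullback. Then R is an Aczel–Mendler coalgebraic bisimulation: there exists a coalgebra structure γ : R → B R such that both projections π1 : R → X1 and π2 : R → X2 are B-coalgebra morphisms from (R, γ) to (X1, h1) and (X2, h2) respectively. -/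
open scoped Classical

/-- A commutative monoid is positive (zerosumfree) if `x + y = 0` implies
`x = 0` and `y = 0`. -/
def IsPositiveMonoid (W : Type*) [AddCommMonoid W] : Prop :=
  ∀ x y : W, x + y = 0 → x = 0 ∧ y = 0

/-- A commutative monoid is a refinement monoid if every equation
`r1 + r2 = c1 + c2` admits a 2×2 refinement matrix. -/
def IsRefinementMonoid (W : Type*) [AddCommMonoid W] : Prop :=
  ∀ r1 r2 c1 c2 : W, r1 + r2 = c1 + c2 →
    ∃ m11 m12 m21 m22 : W,
      r1 = m11 + m12 ∧ r2 = m21 + m22 ∧ c1 = m11 + m21 ∧ c2 = m12 + m22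

/-- The action of the behaviour functor `B = (P_f ∘ F_W)^A` on a function `f`. -/
noncomputable def BMap {W A : Type*} [AddCommMonoid W] {X Y : Type*} (f : X → Y)
    (h : A → Finset (X →₀ W)) : A → Finset (Y →₀ W) :=
  fun a => (h a).image (Finsupp.mapDomain f)

/-!
`B` is a composite of the finite-powerset functor and the functor `X ↦ X →₀ W`, and it suffices
that both weakly preserve the pullback. For finite sets this only needs pairing each element of one
set with an element of the other having the same image. For `X →₀ W`, two families with equal
pushforwards to `Y` are glued by induction on the first one: the refinement property splits the
second family along the corresponding decomposition of its pushforward, and positivity of `W`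
(no nonzero additive units) keeps the support of the resulting coupling inside the pullback.
-/

theorem IsPositiveMonoid.subsingleton_addUnits {W : Type*} [AddCommMonoid W]
    (hpos : IsPositiveMonoid W) : Subsingleton (AddUnits W) :=
  Subsingleton.addUnits_of_isAddUnit fun _ ha ↦
    let ⟨_, h⟩ := ha.exists_neg
    (hpos _ _ h).1

namespace Finsupp

variable {W X1 X2 Y : Type*} [AddCommMonoid W]

theorem exists_split_of_mapDomain_eq_add [Subsingleton (AddUnits W)]
    (href : IsRefinementMonoid W) {f : X1 → Y} (σ : X1 →₀ W) {u v : Y →₀ W}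
    (h : mapDomain f σ = u + v) :
    ∃ ρ ρ' : X1 →₀ W, σ = ρ + ρ' ∧ mapDomain f ρ = u ∧ mapDomain f ρ' = v := by
  induction σ using Finsupp.induction generalizing u v with
  | zero =>
    rw [mapDomain_zero, eq_comm] at h
    have huv (y : Y) := add_eq_zero.1 (DFunLike.congr_fun h y)
    exact ⟨0, 0, by simp, by ext y; simp [(huv y).1], by ext y; simp [(huv y).2]⟩
  | single_add x b σ _ _ ih =>
    rw [mapDomain_add, mapDomain_single] at h
    have h_at (z : Y) := DFunLike.congr_fun h z
    simp only [add_apply, single_apply] at h_at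
    obtain ⟨m11, m12, m21, m22, hb, hσ, hu, hv⟩ := href _ _ _ _ (by simpa using h_at (f x))
    obtain ⟨ρ, ρ', rfl, hρ, hρ'⟩ := ih (u := u.update (f x) m21) (v := v.update (f x) m22) (by
      ext z
      by_cases hz : f x = z
      · simp [← hz, hσ]
      · simpa [update_apply, hz, Ne.symm hz] using h_at z)
    refine ⟨single x m11 + ρ, single x m12 + ρ', by rw [hb, single_add]; abel, ?_, ?_⟩
    all_goals
      ext z
      by_cases hz : f x = z
      · subst hz; simp [mapDomain_add, mapDomain_single, hρ, hρ', hu, hv]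
      · simp [mapDomain_add, mapDomain_single, hρ, hρ', Ne.symm hz]

theorem exists_coupling_of_mapDomain_eq [Subsingleton (AddUnits W)]
    (href : IsRefinementMonoid W) {f1 : X1 → Y} {f2 : X2 → Y} (ρ1 : X1 →₀ W) {ρ2 : X2 →₀ W}
    (h : mapDomain f1 ρ1 = mapDomain f2 ρ2) :
    ∃ m : X1 × X2 →₀ W, (m.support : Set (X1 × X2)) ⊆ {p | f1 p.1 = f2 p.2} ∧
      mapDomain Prod.fst m = ρ1 ∧ mapDomain Prod.snd m = ρ2 := by
  induction ρ1 using Finsupp.induction generalizing ρ2 with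
  | zero =>
    rw [mapDomain_zero, eq_comm, mapDomain_apply_eq_zero_iff_of_subsingletonAddUnits] at h
    exact ⟨0, by simp, mapDomain_zero, h ▸ mapDomain_zero⟩
  | single_add a b ρ1 _ _ ih =>
    rw [mapDomain_add, mapDomain_single, eq_comm] at h
    obtain ⟨ρ, ρ', rfl, hρ, hρ'⟩ := exists_split_of_mapDomain_eq_add href ρ2 h
    obtain ⟨m, hm, hm1, hm2⟩ := ih hρ'.symm
    have hρ_fibre : ∀ x ∈ ρ.support, f2 x = f1 a := by
      intro x hx
      have : f2 x ∈ (mapDomain f2 ρ).support := by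
        rw [mapDomain_support_of_subsingletonAddUnits]
        exact Finset.mem_image_of_mem f2 hx
      simpa using support_single_subset (hρ ▸ this)
    refine ⟨mapDomain (Prod.mk a) ρ + m, ?_, ?_, ?_⟩
    · intro p hp
      rcases Finset.mem_union.1 (support_add hp) with hp | hp
      · obtain ⟨x, hx, rfl⟩ := Finset.mem_image.1 (mapDomain_support hp)
        exact (hρ_fibre x hx).symm
      · exact hm hp
    · rw [mapDomain_add, ← mapDomain_comp, hm1, show Prod.fst ∘ Prod.mk a = (fun _ : Y ↦ a) ∘ f2 from rfl, mapDomain_comp, hρ,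
        mapDomain_single]
    · rw [mapDomain_add, ← mapDomain_comp, hm2]
      exact congrArg (· + ρ') mapDomain_id

theorem exists_pullback_lift_of_mapDomain_eq [Subsingleton (AddUnits W)]
    (href : IsRefinementMonoid W) {f1 : X1 → Y} {f2 : X2 → Y} {ρ1 : X1 →₀ W} {ρ2 : X2 →₀ W}
    (h : mapDomain f1 ρ1 = mapDomain f2 ρ2) :
    ∃ τ : {p : X1 × X2 // f1 p.1 = f2 p.2} →₀ W,
      mapDomain (fun q ↦ q.1.1) τ = ρ1 ∧ mapDomain (fun q ↦ q.1.2) τ = ρ2 := by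
  obtain ⟨m, hm, hm1, hm2⟩ := exists_coupling_of_mapDomain_eq href ρ1 h
  obtain ⟨τ, rfl⟩ : ∃ τ, mapDomain Subtype.val τ = m :=
    ⟨_, mapDomain_comapDomain _ Subtype.val_injective m (by rwa [Subtype.range_coe_subtype])⟩
  rw [← mapDomain_comp] at hm1 hm2
  exact ⟨τ, hm1, hm2⟩

end Finsupp

theorem Finset.exists_pullback_lift_of_image_eq {α β γ δ : Type*} [DecidableEq α] [DecidableEq β]
    [DecidableEq γ] [DecidableEq δ] {F1 : α → γ} {F2 : β → γ} {p1 : δ → α} {p2 : δ → β}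
    (lift : ∀ a b, F1 a = F2 b → ∃ d, p1 d = a ∧ p2 d = b) {S1 : Finset α} {S2 : Finset β}
    (h : S1.image F1 = S2.image F2) :
    ∃ T : Finset δ, T.image p1 = S1 ∧ T.image p2 = S2 := by
  choose l hl1 hl2 using fun ab : {ab : α × β // F1 ab.1 = F2 ab.2} ↦ lift _ _ ab.2
  refine ⟨((S1 ×ˢ S2).subtype fun ab ↦ F1 ab.1 = F2 ab.2).image l, ?_, ?_⟩
  · ext a
    simp only [Finset.mem_image, Finset.mem_subtype, Finset.mem_product]
    constructor
    · rintro ⟨_, ⟨ab, ⟨ha, -⟩, rfl⟩, rfl⟩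
      exact (hl1 ab).symm ▸ ha
    · intro ha
      obtain ⟨b, hb, hab⟩ := Finset.mem_image.1 (h ▸ Finset.mem_image_of_mem F1 ha)
      exact ⟨_, ⟨⟨(a, b), hab.symm⟩, ⟨ha, hb⟩, rfl⟩, hl1 _⟩
  · ext b
    simp only [Finset.mem_image, Finset.mem_subtype, Finset.mem_product]
    constructor
    · rintro ⟨_, ⟨ab, ⟨-, hb⟩, rfl⟩, rfl⟩
      exact (hl2 ab).symm ▸ hb
    · intro hb
      obtain ⟨a, ha, hab⟩ := Finset.mem_image.1 (h.symm ▸ Finset.mem_image_of_mem F2 hb)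
      exact ⟨_, ⟨⟨(a, b), hab⟩, ⟨ha, hb⟩, rfl⟩, hl2 _⟩

/-- Over a positive refinement monoid, the pullback of a cospan of coalgebra
morphisms for `B = (P_f ∘ F_W)^A` carries a coalgebra structure making both
projections coalgebra morphisms, i.e. it is an Aczel–Mendler coalgebraic
bisimulation. -/
theorem pullback_is_aczel_mendler_bisimulation
    {W A X1 X2 Y : Type*} [AddCommMonoid W]
    (hpos : IsPositiveMonoid W) (href : IsRefinementMonoid W)
    (h1 : X1 → A → Finset (X1 →₀ W)) (h2 : X2 → A → Finset (X2 →₀ W))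
    (g : Y → A → Finset (Y →₀ W)) (f1 : X1 → Y) (f2 : X2 → Y)
    (hf1 : ∀ x, g (f1 x) = BMap f1 (h1 x))
    (hf2 : ∀ x, g (f2 x) = BMap f2 (h2 x)) :
    ∃ γ : {p : X1 × X2 // f1 p.1 = f2 p.2} →
          A → Finset ({p : X1 × X2 // f1 p.1 = f2 p.2} →₀ W),
      (∀ r : {p : X1 × X2 // f1 p.1 = f2 p.2},
        h1 r.1.1 = BMap (fun q : {p : X1 × X2 // f1 p.1 = f2 p.2} => q.1.1) (γ r)) ∧
      (∀ r : {p : X1 × X2 // f1 p.1 = f2 p.2},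
        h2 r.1.2 = BMap (fun q : {p : X1 × X2 // f1 p.1 = f2 p.2} => q.1.2) (γ r)) := by
  have := hpos.subsingleton_addUnits
  have hB (r : {p : X1 × X2 // f1 p.1 = f2 p.2}) : BMap f1 (h1 r.1.1) = BMap f2 (h2 r.1.2) := by
    rw [← hf1, ← hf2, r.2]
  choose γ hγ1 hγ2 using fun r a ↦ Finset.exists_pullback_lift_of_image_eq
    (fun _ _ ↦ Finsupp.exists_pullback_lift_of_mapDomain_eq href) (congrFun (hB r) a)
  exact ⟨γ, fun r ↦ funext fun a ↦ (hγ1 r a).symm, fun r ↦ funext fun a ↦ (hγ2 r a).symm⟩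
end

section
/- Let W be a positive refinement commutative monoid. Then the finitely-supported-function functor weakly preserves pullbacks: for all functions f : X → Z and g : Y → Z and all finitely supported functions ρ : X →₀ W and σ : Y →₀ W with Finsupp.mapDomain f ρ = Finsupp.mapDomain g σ, there exists a finitely supported function τ : P →₀ W on the pullback P = { p : X × Y | f p.1 = g p.2 } such that Finsupp.mapDomain (fun p => p.1) τ = ρ and Finsupp.mapDomain (fun p => p.2) τ = σ. -/
section Aux
variable {W Z' : Type*} [AddCommMonoid W]

lemma pos_sum_eq_zero (hpos : IsPositiveMonoid W) {J : Type*} (t : Finset J)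
    (b : J → W) : ∑ j ∈ t, b j = 0 → ∀ j ∈ t, b j = 0 := by
  classical
  induction t using Finset.induction_on with
  | empty => simp
  | @insert j0 s hj ih =>
    intro h
    rw [Finset.sum_insert hj] at h
    obtain ⟨h1, h2⟩ := hpos _ _ h
    intro j hjm
    rcases Finset.mem_insert.mp hjm with rfl | hjs
    · exact h1
    · exact ih h2 j hjs

lemma riesz_decomp (hpos : IsPositiveMonoid W) (href : IsRefinementMonoid W)
    {J : Type*} [DecidableEq J] (t : Finset J) (b : J → W) :
    ∀ a r : W, a + r = ∑ j ∈ t, b j →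
      ∃ c d : J → W, (∀ j ∈ t, b j = c j + d j) ∧
        a = ∑ j ∈ t, c j ∧ r = ∑ j ∈ t, d j := by
  induction t using Finset.induction_on with
  | empty =>
    intro a r h
    simp only [Finset.sum_empty] at h
    obtain ⟨ha, hr⟩ := hpos a r h
    exact ⟨0, 0, by simp, by simp [ha], by simp [hr]⟩
  | @insert j0 s hj ih =>
    intro a r h
    rw [Finset.sum_insert hj] at h
    obtain ⟨m11, m12, m21, m22, ha, hr, hb0, hrest⟩ :=
      href a r (b j0) (∑ j ∈ s, b j) h
    obtain ⟨c', d', hcd, hc, hd⟩ := ih m12 m22 hrest.symm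
    refine ⟨Function.update c' j0 m11, Function.update d' j0 m21, ?_, ?_, ?_⟩
    · intro j hjm
      rcases Finset.mem_insert.mp hjm with rfl | hjs
      · simp [hb0]
      · have hne : j ≠ j0 := fun e => hj (by rw [← e]; exact hjs)
        simp [Function.update_of_ne hne, hcd j hjs]
    · rw [Finset.sum_insert hj, Function.update_self, ha, hc]
      congr 1
      exact Finset.sum_congr rfl fun j hjs =>
        (Function.update_of_ne (fun e => hj (by rw [← e]; exact hjs)) _ _).symm
    · rw [Finset.sum_insert hj, Function.update_self, hr, hd]
      congr 1
      exact Finset.sum_congr rfl fun j hjs =>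
        (Function.update_of_ne (fun e => hj (by rw [← e]; exact hjs)) _ _).symm

lemma finset_refinement (hpos : IsPositiveMonoid W) (href : IsRefinementMonoid W)
    {I J : Type*} [DecidableEq I] [DecidableEq J]
    (s : Finset I) : ∀ (t : Finset J) (a : I → W) (b : J → W),
    ∑ i ∈ s, a i = ∑ j ∈ t, b j →
    ∃ m : I → J → W, (∀ i ∈ s, a i = ∑ j ∈ t, m i j) ∧
      (∀ j ∈ t, b j = ∑ i ∈ s, m i j) := by
  induction s using Finset.induction_on with
  | empty =>
    intro t a b h
    refine ⟨0, by simp, fun j hj => ?_⟩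
    simpa using pos_sum_eq_zero hpos t b (by simpa using h.symm) j hj
  | @insert i0 s hi ih =>
    intro t a b h
    rw [Finset.sum_insert hi] at h
    obtain ⟨c, d, hcd, hc, hd⟩ := riesz_decomp hpos href t b (a i0) (∑ i ∈ s, a i) h
    obtain ⟨m', hm1, hm2⟩ := ih t a d hd
    refine ⟨Function.update m' i0 c, ?_, ?_⟩
    · intro i him
      rcases Finset.mem_insert.mp him with rfl | his
      · simpa [Function.update_self] using hc
      · have hne : i ≠ i0 := fun e => hi (by rw [← e]; exact his)
        simp only [Function.update_of_ne hne]
        exact hm1 i his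
    · intro j hjt
      rw [Finset.sum_insert hi, Function.update_self, hcd j hjt, hm2 j hjt]
      congr 1
      exact Finset.sum_congr rfl fun i his =>
        (congrFun (Function.update_of_ne (fun e => hi (by rw [← e]; exact his)) _ _) j).symm

lemma mapDomain_apply_eq {α : Type*} (u : α → Z') (θ : α →₀ W) (z : Z')
    [DecidableEq Z'] :
    Finsupp.mapDomain u θ z = ∑ a ∈ θ.support.filter (fun a => u a = z), θ a := by
  classical
  rw [Finsupp.mapDomain, Finsupp.sum_apply, Finsupp.sum, Finset.sum_filter]
  exact Finset.sum_congr rfl fun a _ => Finsupp.single_apply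

lemma mapDomain_double_sum {α β X Y : Type*} (φ : α → β)
    (S : Finset X) (T : Finset Y) (F : X → Y → (α →₀ W)) :
    Finsupp.mapDomain φ (∑ x ∈ S, ∑ y ∈ T, F x y)
      = ∑ x ∈ S, ∑ y ∈ T, Finsupp.mapDomain φ (F x y) := by
  rw [show Finsupp.mapDomain φ = ⇑(Finsupp.mapDomain.addMonoidHom φ) from rfl,
    map_sum]
  exact Finset.sum_congr rfl fun x _ => map_sum _ _ _

end Aux


/-- Over a positive refinement monoid, the finitely-supported-function functor
weakly preserves pullbacks. -/
theorem finsupp_weakly_preserves_pullbacks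
    {W X Y Z : Type*} [AddCommMonoid W]
    (hpos : IsPositiveMonoid W) (href : IsRefinementMonoid W)
    (f : X → Z) (g : Y → Z) (ρ : X →₀ W) (σ : Y →₀ W)
    (h : Finsupp.mapDomain f ρ = Finsupp.mapDomain g σ) :
    ∃ τ : {p : X × Y // f p.1 = g p.2} →₀ W,
      Finsupp.mapDomain (fun p : {p : X × Y // f p.1 = g p.2} => p.1.1) τ = ρ ∧
      Finsupp.mapDomain (fun p : {p : X × Y // f p.1 = g p.2} => p.1.2) τ = σ := by
  classical
  set S := ρ.support with hS
  set T := σ.support with hT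
  have key : ∀ z : Z,
      ∑ x ∈ S.filter (fun x => f x = z), ρ x
        = ∑ y ∈ T.filter (fun y => g y = z), σ y := by
    intro z
    rw [← mapDomain_apply_eq f ρ z, ← mapDomain_apply_eq g σ z, h]
  choose M hM1 hM2 using fun z : Z =>
    finset_refinement hpos href (S.filter (fun x => f x = z))
      (T.filter (fun y => g y = z)) ρ σ (key z)
  refine ⟨∑ x ∈ S, ∑ y ∈ T, if hxy : f x = g y then
      Finsupp.single (⟨(x, y), hxy⟩ : {p : X × Y // f p.1 = g p.2}) (M (f x) x y)
      else 0, ?_, ?_⟩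
  · rw [mapDomain_double_sum]
    have step : ∀ x ∈ S,
        (∑ y ∈ T, Finsupp.mapDomain
          (fun p : {p : X × Y // f p.1 = g p.2} => p.1.1)
          (if hxy : f x = g y then
            Finsupp.single (⟨(x, y), hxy⟩ : {p : X × Y // f p.1 = g p.2}) (M (f x) x y)
            else 0))
          = Finsupp.single x (ρ x) := by
      intro x hx
      have e1 : ∀ y ∈ T, Finsupp.mapDomain
          (fun p : {p : X × Y // f p.1 = g p.2} => p.1.1)
          (if hxy : f x = g y then
            Finsupp.single (⟨(x, y), hxy⟩ : {p : X × Y // f p.1 = g p.2}) (M (f x) x y)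
            else 0)
          = Finsupp.single x (if g y = f x then M (f x) x y else 0) := by
        intro y _
        by_cases hxy : f x = g y
        · rw [dif_pos hxy, Finsupp.mapDomain_single, if_pos hxy.symm]
        · rw [dif_neg hxy, Finsupp.mapDomain_zero, if_neg (fun e => hxy e.symm),
            Finsupp.single_zero]
      rw [Finset.sum_congr rfl e1, ← Finsupp.single_finset_sum,
        ← Finset.sum_filter]
      congr 1
      exact (hM1 (f x) x (Finset.mem_filter.mpr ⟨hx, rfl⟩)).symm
    rw [Finset.sum_congr rfl step]
    conv_rhs => rw [← Finsupp.sum_single ρ, Finsupp.sum]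
  · rw [mapDomain_double_sum, Finset.sum_comm]
    have step : ∀ y ∈ T,
        (∑ x ∈ S, Finsupp.mapDomain
          (fun p : {p : X × Y // f p.1 = g p.2} => p.1.2)
          (if hxy : f x = g y then
            Finsupp.single (⟨(x, y), hxy⟩ : {p : X × Y // f p.1 = g p.2}) (M (f x) x y)
            else 0))
          = Finsupp.single y (σ y) := by
      intro y hy
      have e1 : ∀ x ∈ S, Finsupp.mapDomain
          (fun p : {p : X × Y // f p.1 = g p.2} => p.1.2)
          (if hxy : f x = g y then
            Finsupp.single (⟨(x, y), hxy⟩ : {p : X × Y // f p.1 = g p.2}) (M (f x) x y)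
            else 0)
          = Finsupp.single y (if f x = g y then M (g y) x y else 0) := by
        intro x _
        by_cases hxy : f x = g y
        · rw [dif_pos hxy, Finsupp.mapDomain_single, if_pos hxy, hxy]
        · rw [dif_neg hxy, Finsupp.mapDomain_zero, if_neg hxy, Finsupp.single_zero]
      rw [Finset.sum_congr rfl e1, ← Finsupp.single_finset_sum,
        ← Finset.sum_filter]
      congr 1
      exact (hM2 (g y) y (Finset.mem_filter.mpr ⟨hy, rfl⟩)).symm
    rw [Finset.sum_congr rfl step]
    conv_rhs => rw [← Finsupp.sum_single σ, Finsupp.sum]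
end

section
/- Let W be a commutative monoid and A a type of labels, and let B be the endofunctor on types sending X to A → Finset (X →₀ W) and a function f : X → Y to the map h ↦ (fun a => Finset.image (Finsupp.mapDomain f) (h a)). Then the category of B-coalgebras has a terminal object: there exists a B-coalgebra (Ω, ω) such that for every B-coalgebra (X, h) there is a unique B-coalgebra morphism from (X, h) to (Ω, ω). -/
open scoped Classical

universe u

namespace UltrasFinal

variable (W A : Type u) [AddCommMonoid W]

/-- The behaviour functor as a plain type function. -/
def FF (X : Type u) : Type u := A → Finset (X →₀ W)

noncomputable instance : Functor (FF W A) where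
  map f := BMap f

/-- The polynomial functor covering `FF`. -/
def PP : PFunctor.{u} :=
  ⟨A → Σ n : ULift.{u} ℕ, Fin n.down → Σ m : ULift.{u} ℕ, Fin m.down → W,
   fun s => Σ a : A, Σ i : Fin (s a).1.down, Fin (((s a).2 i).1.down)⟩

variable {W A}

noncomputable def absF {X : Type u} (p : (PP W A) X) : FF W A X :=
  fun a => Finset.image (fun i : Fin ((p.1 a).1.down) =>
    ∑ j : Fin (((p.1 a).2 i).1.down),
      Finsupp.single (p.2 ⟨a, i, j⟩) (((p.1 a).2 i).2 j)) Finset.univ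

noncomputable def reprF {X : Type u} (x : FF W A X) : (PP W A) X :=
  ⟨fun a => ⟨⟨(x a).card, ⟩, fun i =>
      ⟨⟨(((x a).equivFin.symm i : (x a)) : X →₀ W).support.card⟩,
       fun j => (((x a).equivFin.symm i : (x a)) : X →₀ W)
          (((((x a).equivFin.symm i : (x a)) : X →₀ W).support.equivFin.symm j : _))⟩⟩,
   fun p => ((((x p.1).equivFin.symm p.2.1 : (x p.1)) : X →₀ W).support.equivFin.symm p.2.2 : _)⟩

lemma sum_single_support {X : Type u} (ρ : X →₀ W) :
    ∑ j : Fin ρ.support.card,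
      Finsupp.single ((ρ.support.equivFin.symm j : ρ.support) : X)
        (ρ ((ρ.support.equivFin.symm j : ρ.support) : X)) = ρ := by
  rw [Equiv.sum_comp ρ.support.equivFin.symm
    (fun t : ρ.support => Finsupp.single (t : X) (ρ (t : X)))]
  rw [Finset.sum_coe_sort ρ.support (fun x => Finsupp.single x (ρ x))]
  exact Finsupp.sum_single ρ

lemma image_equivFin {X : Type u} [inst : DecidableEq X] (s : Finset X) :
    @Finset.image _ _ inst (fun i => ((s.equivFin.symm i : s) : X)) Finset.univ = s := by
  ext y
  simp only [Finset.mem_image, Finset.mem_univ, true_and]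
  constructor
  · rintro ⟨i, rfl⟩; exact (s.equivFin.symm i).2
  · intro hy; exact ⟨s.equivFin ⟨y, hy⟩, by simp⟩

lemma abs_reprF {X : Type u} (x : FF W A X) : absF (reprF x) = x := by
  funext a
  show Finset.image _ Finset.univ = x a
  exact (Finset.image_congr (fun i _ => sum_single_support _)).trans (image_equivFin (x a))

lemma abs_mapF {X Y : Type u} (f : X → Y) (p : (PP W A) X) :
    absF ((PP W A).map f p) = BMap f (absF p) := by
  funext a
  show Finset.image _ Finset.univ
      = Finset.image (Finsupp.mapDomain f) (Finset.image _ Finset.univ)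
  rw [Finset.image_image]
  refine Finset.image_congr fun i _ => ?_
  show ∑ j : Fin ((((PP W A).map f p).1 a).2 i).1.down,
        Finsupp.single (f (p.2 ⟨a, i, j⟩)) (((p.1 a).2 i).2 j)
      = Finsupp.mapDomain f (∑ j : Fin (((p.1 a).2 i).1.down),
        Finsupp.single (p.2 ⟨a, i, j⟩) (((p.1 a).2 i).2 j))
  rw [Finsupp.mapDomain_finset_sum]
  exact Finset.sum_congr rfl fun j _ => (Finsupp.mapDomain_single).symm

variable (W A)

noncomputable instance : QPF (FF W A) where
  P := PP W A
  abs := absF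
  repr := reprF
  abs_repr := abs_reprF
  abs_map := fun f p => abs_mapF f p

variable {W A}

lemma dest_corec' {X : Type u} (h : X → FF W A X) (x : X) :
    QPF.Cofix.dest (QPF.Cofix.corec h x) = BMap (QPF.Cofix.corec h) (h x) :=
  QPF.Cofix.dest_corec h x

lemma BMap_comp {X Y Z : Type u} (f : X → Y) (g : Y → Z) (s : A → Finset (X →₀ W)) :
    BMap g (BMap f s) = BMap (g ∘ f) s := by
  funext a
  show Finset.image (Finsupp.mapDomain g) (Finset.image (Finsupp.mapDomain f) (s a)) = _
  rw [Finset.image_image]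
  exact Finset.image_congr fun ρ _ => by rw [Finsupp.mapDomain_comp]; rfl

end UltrasFinal

/-- The category of coalgebras for the behaviour functor
`B X = A → Finset (X →₀ W)` of image-finite `W`-ULTraSs has a terminal (final)
object: there is a coalgebra `(Ω, ω)` to which every coalgebra `(X, h)` has a
unique coalgebra morphism. -/
theorem ultras_final_coalgebra_exists (W A : Type u) [AddCommMonoid W] :
    ∃ (Ω : Type u) (ω : Ω → A → Finset (Ω →₀ W)),
      ∀ (X : Type u) (h : X → A → Finset (X →₀ W)),
        ∃! f : X → Ω, ∀ x : X, ω (f x) = BMap f (h x) := by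
  classical
  refine ⟨QPF.Cofix (UltrasFinal.FF W A), fun o => QPF.Cofix.dest o, fun X h => ?_⟩
  refine ⟨QPF.Cofix.corec h, fun x => UltrasFinal.dest_corec' h x, ?_⟩
  intro f hf
  have key : ∀ (f₁ f₂ : X → QPF.Cofix (UltrasFinal.FF W A)),
      (∀ x, QPF.Cofix.dest (f₁ x) = BMap f₁ (h x)) →
      (∀ x, QPF.Cofix.dest (f₂ x) = BMap f₂ (h x)) →
      ∀ x, f₁ x = f₂ x := by
    intro f₁ f₂ h₁ h₂
    have main : ∀ u v, (∃ z, u = f₁ z ∧ v = f₂ z) → u = v := by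
      refine QPF.Cofix.bisim_rel _ ?_
      rintro u v ⟨y, rfl, rfl⟩
      show BMap _ (QPF.Cofix.dest (f₁ y)) = BMap _ (QPF.Cofix.dest (f₂ y))
      rw [h₁, h₂, UltrasFinal.BMap_comp, UltrasFinal.BMap_comp,
        show (Quot.mk _ ∘ f₁ : X → _) = Quot.mk _ ∘ f₂ from
          funext fun z => Quot.sound ⟨z, rfl, rfl⟩]
    exact fun x => main _ _ ⟨x, rfl, rfl⟩
  exact funext (key f (QPF.Cofix.corec h) hf (fun x => UltrasFinal.dest_corec' h x))
end
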